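/- Let 0 < y < 1 and let a > 0 with a ∉ [1−√y, 1+√y]; set φ(a) = a + ya/(a−1). Then m₁(φ(a)) = ∫ x/(φ(a)−x) dF_y(x) = 1/(a−1). -/

import Mathlib

/-!
On its support `[m - r, m + r]`, with `m = 1 + y` and `r = 2√y`, the Marčenko–Pastur density
times `x` is the semicircle `√(r² - (x - m)²) / (2πy)`, so `m₁(λ)` is a Stieltjes transform of
the semicircle. Writing `λ = m + r (s + s⁻¹) / 2` with `|s| > 1` (Joukowski), that transform is
`π r / s`: for `s > 1` this follows from an explicit arcsine primitive, and `s < -1` is its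
mirror image. The spike map `φ` is exactly this parametrisation with `s = (a - 1) / √y`, which
gives `m₁(φ(a)) = 2π y / ((a - 1) · 2π y) = 1 / (a - 1)`.
-/

open MeasureTheory Real

/-- Density of the Marčenko–Pastur distribution with ratio parameter `c` (the absolutely
continuous part; it vanishes outside `[(1-√c)², (1+√c)²]`). -/
noncomputable def mpDensity (c x : ℝ) : ℝ :=
  if (1 - Real.sqrt c) ^ 2 ≤ x ∧ x ≤ (1 + Real.sqrt c) ^ 2 then
    Real.sqrt ((x - (1 - Real.sqrt c) ^ 2) * ((1 + Real.sqrt c) ^ 2 - x)) /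
      (2 * Real.pi * c * x)
  else 0

/-- The Marčenko–Pastur law with ratio parameter `c > 0`: an atom of mass `max (1 - 1/c) 0`
at `0` plus the absolutely continuous part with density `mpDensity c`.  For `c < 1` (in
particular for `c = y ∈ (0,1)`) the atom vanishes and this is the measure `F_y` with density
`(1/(2πxy))√((x-a_y)(b_y-x))` on `[a_y, b_y]`, `a_y = (1-√y)²`, `b_y = (1+√y)²`. -/
noncomputable def mpLaw (c : ℝ) : Measure ℝ :=
  ENNReal.ofReal (1 - 1 / c) • Measure.dirac 0 +
    (volume : Measure ℝ).withDensity fun x => ENNReal.ofReal (mpDensity c x)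

/-- The map `φ(a) = a + ya/(a-1)` sending a spike outside `[1-√y, 1+√y]` to the a.s. limit
of the corresponding extreme sample eigenvalue, outside the Marčenko–Pastur support. -/
noncomputable def phiSpike (y a : ℝ) : ℝ := a + y * a / (a - 1)

open Set

noncomputable def semicirclePrimitive (c t : ℝ) : ℝ :=
  -√(1 - t ^ 2) + c * arcsin t - √(c ^ 2 - 1) * arcsin ((1 - c * t) / (t - c))

lemma hasDerivAt_arcsin_one_sub_mul_div_sub {c t : ℝ} (hc : 1 < c) (ht : t ∈ Ioo (-1) 1) :
    HasDerivAt (fun t => arcsin ((1 - c * t) / (t - c)))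
      (√(c ^ 2 - 1) / ((c - t) * √(1 - t ^ 2))) t := by
  obtain ⟨ht₁, ht₂⟩ := ht
  set S := √(1 - t ^ 2)
  set d := √(c ^ 2 - 1)
  have hSsq : S ^ 2 = 1 - t ^ 2 := sq_sqrt (by nlinarith)
  have hdsq : d ^ 2 = c ^ 2 - 1 := sq_sqrt (by nlinarith)
  have hS0 : 0 < S := sqrt_pos.2 (by nlinarith)
  have hd0 : 0 < d := sqrt_pos.2 (by nlinarith)
  have hct : 0 < c - t := by linarith
  have htc : t - c ≠ 0 := by linarith
  set g : ℝ → ℝ := fun t => (1 - c * t) / (t - c)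
  have hg : HasDerivAt g (d ^ 2 / (c - t) ^ 2) t := by
    refine (((hasDerivAt_id' t).const_mul c).const_sub 1 |>.div
      ((hasDerivAt_id' t).sub_const c) htc).congr_deriv ?_
    rw [hdsq]
    field_simp
    ring
  have hg_sq : 1 - g t ^ 2 = (S * d / (c - t)) ^ 2 := by
    simp only [g]
    rw [div_pow, div_pow, mul_pow, hSsq, hdsq]
    field_simp
    ring
  have hg_lt : g t ^ 2 < 1 := by
    have : 0 < (S * d / (c - t)) ^ 2 := by positivity
    linarith
  have hg₁ : g t ≠ -1 := fun h => by rw [h] at hg_lt; norm_num at hg_lt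
  have hg₂ : g t ≠ 1 := fun h => by rw [h] at hg_lt; norm_num at hg_lt
  refine ((hasDerivAt_arcsin hg₁ hg₂).comp t hg).congr_deriv ?_
  rw [hg_sq, sqrt_sq (by positivity)]
  field_simp

lemma hasDerivAt_semicirclePrimitive {c t : ℝ} (hc : 1 < c) (ht : t ∈ Ioo (-1) 1) :
    HasDerivAt (semicirclePrimitive c) (√(1 - t ^ 2) / (c - t)) t := by
  set S := √(1 - t ^ 2) with hS
  set d := √(c ^ 2 - 1)
  have hSsq : S ^ 2 = 1 - t ^ 2 := sq_sqrt (by nlinarith [ht.1, ht.2])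
  have hdsq : d ^ 2 = c ^ 2 - 1 := sq_sqrt (by nlinarith)
  have hS0 : 0 < S := sqrt_pos.2 (by nlinarith [ht.1, ht.2])
  have hct : c - t ≠ 0 := by linarith [ht.2]
  have hsqrt : HasDerivAt (fun t => -√(1 - t ^ 2)) (t / S) t := by
    refine (((hasDerivAt_pow 2 t).const_sub 1).sqrt (sqrt_pos.1 hS0).ne').neg.congr_deriv ?_
    rw [← hS]
    field_simp
    norm_num
  have harcsin :=
    (hasDerivAt_arcsin (x := t) (by linarith [ht.1]) (by linarith [ht.2])).const_mul c
  refine ((hsqrt.add harcsin).sub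
    ((hasDerivAt_arcsin_one_sub_mul_div_sub hc ht).const_mul d)).congr_deriv ?_
  rw [← hS]
  field_simp
  linear_combination -hSsq - hdsq

lemma continuousOn_semicirclePrimitive {c : ℝ} (hc : 1 < c) :
    ContinuousOn (semicirclePrimitive c) (Icc (-1) 1) := by
  unfold semicirclePrimitive
  fun_prop (disch := intro t (ht : t ∈ Icc (-1) 1); linarith [ht.2])

lemma semicirclePrimitive_one_sub_neg_one {c : ℝ} (hc : 1 < c) :
    semicirclePrimitive c 1 - semicirclePrimitive c (-1) = π * (c - √(c ^ 2 - 1)) := by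
  have h₁ : (1 - c * 1) / (1 - c) = 1 := by rw [mul_one]; exact div_self (by linarith)
  have h₂ : (1 - c * -1) / (-1 - c) = -1 := by
    rw [div_eq_iff (by linarith : (-1 : ℝ) - c ≠ 0)]; ring
  simp only [semicirclePrimitive, h₁, h₂, arcsin_one, arcsin_neg_one]
  norm_num
  ring

lemma integral_sqrt_one_sub_sq_div_sub {c : ℝ} (hc : 1 < c) :
    ∫ t in (-1)..1, √(1 - t ^ 2) / (c - t) = π * (c - √(c ^ 2 - 1)) := by
  rw [intervalIntegral.integral_eq_sub_of_hasDerivAt_of_le (by norm_num)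
    (continuousOn_semicirclePrimitive hc) (fun t ht => hasDerivAt_semicirclePrimitive hc ht)]
  · exact semicirclePrimitive_one_sub_neg_one hc
  · refine ContinuousOn.intervalIntegrable ?_
    rw [uIcc_of_le (by norm_num)]
    fun_prop (disch := intro t (ht : t ∈ Icc (-1) 1); linarith [ht.2])

lemma integral_sqrt_one_sub_sq_div_joukowski_of_one_lt {s : ℝ} (hs : 1 < s) :
    ∫ t in (-1)..1, √(1 - t ^ 2) / ((s + s⁻¹) / 2 - t) = π / s := by
  have hs0 : 0 < s := by linarith
  have hsinv : s⁻¹ < s := (inv_lt_one_of_one_lt₀ hs).trans hs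
  have hc : 1 < (s + s⁻¹) / 2 := by
    have : s + s⁻¹ - 2 = (s - 1) ^ 2 / s := by field_simp; ring
    have : 0 < (s - 1) ^ 2 / s := by have := sub_pos.2 hs; positivity
    linarith
  have hd : √(((s + s⁻¹) / 2) ^ 2 - 1) = (s - s⁻¹) / 2 := by
    rw [sqrt_eq_iff_eq_sq _ (by linarith)]
    · field_simp; ring
    · nlinarith
  rw [integral_sqrt_one_sub_sq_div_sub hc, hd]
  field_simp
  ring

lemma integral_sqrt_one_sub_sq_div_joukowski {s : ℝ} (hs : 1 < |s|) :
    ∫ t in (-1)..1, √(1 - t ^ 2) / ((s + s⁻¹) / 2 - t) = π / s := by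
  rcases lt_abs.1 hs with hs | hs
  · exact integral_sqrt_one_sub_sq_div_joukowski_of_one_lt hs
  set F := fun t => √(1 - t ^ 2) / ((-s + (-s)⁻¹) / 2 - t)
  calc ∫ t in (-1)..1, √(1 - t ^ 2) / ((s + s⁻¹) / 2 - t)
      = -∫ t in (-1)..1, F (-t) := by
        rw [← intervalIntegral.integral_neg]
        congr 1 with t
        simp only [F]
        rw [show (-s + (-s)⁻¹) / 2 - -t = -((s + s⁻¹) / 2 - t) by rw [inv_neg]; ring,
          neg_sq, div_neg, neg_neg]
    _ = -∫ t in (-1)..1, F t := by rw [intervalIntegral.integral_comp_neg]; norm_num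
    _ = π / s := by
        rw [integral_sqrt_one_sub_sq_div_joukowski_of_one_lt hs, div_neg, neg_neg]

lemma integral_sqrt_sq_sub_sq_div_joukowski (m : ℝ) {r s : ℝ} (hr : 0 < r) (hs : 1 < |s|) :
    ∫ x in (m - r)..(m + r), √(r ^ 2 - (x - m) ^ 2) / (m + r * ((s + s⁻¹) / 2) - x)
      = π * r / s := by
  set G := fun x => √(r ^ 2 - (x - m) ^ 2) / (m + r * ((s + s⁻¹) / 2) - x)
  have hG : ∀ t, G (r * t + m) = √(1 - t ^ 2) / ((s + s⁻¹) / 2 - t) := by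
    intro t
    simp only [G]
    rw [show r ^ 2 - (r * t + m - m) ^ 2 = r ^ 2 * (1 - t ^ 2) by ring, sqrt_mul (sq_nonneg r),
      sqrt_sq hr.le, show m + r * ((s + s⁻¹) / 2) - (r * t + m) = r * ((s + s⁻¹) / 2 - t) by ring,
      mul_div_mul_left _ _ hr.ne']
  calc ∫ x in (m - r)..(m + r), G x
      = r * ∫ t in (-1)..1, G (r * t + m) := by
        rw [intervalIntegral.integral_comp_mul_add _ hr.ne', smul_eq_mul,
          mul_inv_cancel_left₀ hr.ne']
        congr 1 <;> ring
    _ = π * r / s := by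
        simp only [hG]
        rw [integral_sqrt_one_sub_sq_div_joukowski hs]
        ring

lemma sq_one_sub_sqrt {c : ℝ} (hc : 0 ≤ c) : (1 - √c) ^ 2 = 1 + c - 2 * √c := by
  linear_combination sq_sqrt hc

lemma sq_one_add_sqrt {c : ℝ} (hc : 0 ≤ c) : (1 + √c) ^ 2 = 1 + c + 2 * √c := by
  linear_combination sq_sqrt hc

lemma mpLaw_eq_withDensity {c : ℝ} (hc0 : 0 < c) (hc1 : c ≤ 1) :
    mpLaw c = volume.withDensity fun x => ENNReal.ofReal (mpDensity c x) := by
  have hatom : 1 - 1 / c ≤ 0 := by rw [sub_nonpos, le_div_iff₀ hc0]; linarith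
  rw [mpLaw, ENNReal.ofReal_eq_zero.2 hatom, zero_smul, zero_add]

lemma measurable_mpDensity (c : ℝ) : Measurable (mpDensity c) :=
  Measurable.ite measurableSet_Icc (by fun_prop) measurable_const

lemma mpDensity_nonneg {c : ℝ} (hc : 0 ≤ c) (x : ℝ) : 0 ≤ mpDensity c x := by
  unfold mpDensity
  split_ifs with hx
  · have : 0 ≤ x := (sq_nonneg _).trans hx.1
    positivity
  · rfl

lemma mul_mpDensity_of_mem {c x : ℝ} (hc0 : 0 < c) (hc1 : c < 1)
    (hx : x ∈ Icc (1 + c - 2 * √c) (1 + c + 2 * √c)) :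
    x * mpDensity c x = √((2 * √c) ^ 2 - (x - (1 + c)) ^ 2) / (2 * π * c) := by
  have hx0 : x ≠ 0 := by
    have : √c < 1 := by nlinarith [sq_sqrt hc0.le, sqrt_nonneg c]
    have : 0 < 1 + c - 2 * √c := by rw [← sq_one_sub_sqrt hc0.le]; exact pow_pos (by linarith) 2
    linarith [hx.1]
  rw [mpDensity, if_pos (by rwa [sq_one_sub_sqrt hc0.le, sq_one_add_sqrt hc0.le]), mul_div_assoc',
    mul_comm x, mul_div_mul_right _ _ hx0]
  congr 2
  linear_combination (2 * x - 2 - c - √c ^ 2) * sq_sqrt hc0.le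

lemma integral_mpLaw {c : ℝ} (hc0 : 0 < c) (hc1 : c ≤ 1) (g : ℝ → ℝ) :
    ∫ x, g x ∂mpLaw c = ∫ x in (1 + c - 2 * √c)..(1 + c + 2 * √c), mpDensity c x * g x := by
  calc ∫ x, g x ∂mpLaw c
      = ∫ x, (mpDensity c x).toNNReal • g x := by
        rw [mpLaw_eq_withDensity hc0 hc1]
        exact integral_withDensity_eq_integral_smul (measurable_mpDensity c).real_toNNReal g
    _ = ∫ x in Icc ((1 - √c) ^ 2) ((1 + √c) ^ 2), mpDensity c x * g x := by
        rw [setIntegral_eq_integral_of_forall_compl_eq_zero fun x hx => by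
          rw [mpDensity, if_neg (hx <| mem_Icc.2 ·), zero_mul]]
        congr 1 with x
        rw [NNReal.smul_def, smul_eq_mul, Real.coe_toNNReal _ (mpDensity_nonneg hc0.le x)]
    _ = ∫ x in (1 + c - 2 * √c)..(1 + c + 2 * √c), mpDensity c x * g x := by
        rw [integral_Icc_eq_integral_Ioc, sq_one_sub_sqrt hc0.le, sq_one_add_sqrt hc0.le,
          intervalIntegral.integral_of_le (by linarith [sqrt_nonneg c])]

lemma one_lt_abs_sub_one_div_sqrt {y a : ℝ} (hy : 0 < y)
    (hout : a ∉ Icc (1 - √y) (1 + √y)) : 1 < |(a - 1) / √y| := by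
  have hr : 0 < √y := sqrt_pos.2 hy
  rw [mem_Icc, not_and_or, not_le, not_le] at hout
  rw [abs_div, abs_of_pos hr, one_lt_div hr, lt_abs]
  rcases hout with h | h
  · right; linarith
  · left; linarith

lemma phiSpike_eq_joukowski {y a : ℝ} (hy : 0 < y) (ha : a - 1 ≠ 0) :
    phiSpike y a = 1 + y + 2 * √y * (((a - 1) / √y + ((a - 1) / √y)⁻¹) / 2) := by
  have hr : √y ≠ 0 := (sqrt_pos.2 hy).ne'
  rw [phiSpike]
  field_simp
  linear_combination -sq_sqrt hy.le

theorem mp_m1_phi_general (y a : ℝ) (hy0 : 0 < y) (hy1 : y < 1)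
    (hout : a ∉ Set.Icc (1 - Real.sqrt y) (1 + Real.sqrt y)) :
    (∫ x, x / (phiSpike y a - x) ∂mpLaw y) = 1 / (a - 1) := by
  have hr : 0 < √y := sqrt_pos.2 hy0
  have hs := one_lt_abs_sub_one_div_sqrt hy0 hout
  have ha : a - 1 ≠ 0 := fun h => by norm_num [h] at hs
  calc ∫ x, x / (phiSpike y a - x) ∂mpLaw y
      = ∫ x in (1 + y - 2 * √y)..(1 + y + 2 * √y), mpDensity y x * (x / (phiSpike y a - x)) :=
        integral_mpLaw hy0 hy1.le _
    _ = (2 * π * y)⁻¹ * ∫ x in (1 + y - 2 * √y)..(1 + y + 2 * √y),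
          √((2 * √y) ^ 2 - (x - (1 + y)) ^ 2) / (phiSpike y a - x) := by
        rw [← intervalIntegral.integral_const_mul]
        refine intervalIntegral.integral_congr fun x hx => ?_
        rw [uIcc_of_le (by linarith)] at hx
        rw [← mul_div_assoc, mul_comm (mpDensity y x), mul_mpDensity_of_mem hy0 hy1 hx]
        ring
    _ = 1 / (a - 1) := by
        rw [phiSpike_eq_joukowski hy0 ha,
          integral_sqrt_sq_sub_sq_div_joukowski _ (by positivity) hs]
        field_simp
        linear_combination sq_sqrt hy0.le

/-- `m₁(φ(a)) = ∫ x/(φ(a)−x) dF_y(x) = 1/(a−1)` for a spike `a` outside the bulk. -/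
theorem mp_m1_phi (y a : ℝ) (hy0 : 0 < y) (hy1 : y < 1) (ha : 0 < a)
    (hout : a ∉ Set.Icc (1 - Real.sqrt y) (1 + Real.sqrt y)) :
    (∫ x, x / (phiSpike y a - x) ∂mpLaw y) = 1 / (a - 1) :=
  mp_m1_phi_general y a hy0 hy1 hout
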